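/- arXiv:0903.4366 — 2 statements merged into one kernel-verified Lean document; each statement's English description precedes it below -/
import Mathlib

section
/- Let P = [a₁/b₁,…,a_k/b_k] be a Fractran program, d = lcm(b₁,…,b_k). For n ∈ {1,…,d}, define a'_n = a_i·(d/b_i) and o_n = n·(a_i/b_i) where a_i/b_i is the first fraction of P such that n·a_i/b_i is an integer (both undefined if no such fraction exists). Let φ(n) denote the unique element of {1,…,d} congruent to n modulo d. Then for every positive integer n on which f_P is defined: f_P(n) = ⌊(n−1)/d⌋ · a'_{φ(n)} + o_{φ(n)}. Moreover, f_P(n) is undefined if and only if a'_{φ(n)} is undefined. -/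
/-- One step of a Fractran program `P` on input `n`: multiply `n` by the first
fraction in the list whose product with `n` is an integer; `none` if no such fraction. -/
def fracStep (P : List ℚ) (n : ℕ) : Option ℕ :=
  ((P.map (fun q => (n : ℚ) * q)).find? (fun x => x.den == 1)).map (fun x => x.num.toNat)

/-- `i`-fold iteration of the partial Fractran step function. -/
def fracIter (P : List ℚ) : ℕ → ℕ → Option ℕ
  | 0, n => some n
  | i + 1, n => (fracStep P n).bind (fracIter P i)

/-- `d`: the least common multiple of the denominators of the program. -/
def fracD (P : List ℚ) : ℕ := (P.map (fun q => q.den)).foldr Nat.lcm 1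

/-- `a'_n = a_i · (d / b_i)` for the first fraction `a_i/b_i` of `P` such that
`n · a_i/b_i` is an integer; `none` if no such fraction exists. -/
def fracA' (P : List ℚ) (n : ℕ) : Option ℕ :=
  (P.find? (fun q => ((n : ℚ) * q).den == 1)).map (fun q => q.num.toNat * (fracD P / q.den))

/-- `o_n = n · a_i/b_i` for the first fraction `a_i/b_i` of `P` such that
`n · a_i/b_i` is an integer; `none` if no such fraction exists. -/
def fracO (P : List ℚ) (n : ℕ) : Option ℕ :=
  (P.find? (fun q => ((n : ℚ) * q).den == 1)).map (fun q => ((n : ℚ) * q).num.toNat)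

/-- `φ(n)`: the unique element of `{1, …, d}` congruent to `n` modulo `d`. -/
def phi (d n : ℕ) : ℕ := (n - 1) % d + 1

/-! Every denominator `b_i` divides `d`, so writing `n = k d + φ(n)` with `k = ⌊(n-1)/d⌋`
gives `b_i ∣ n ↔ b_i ∣ φ(n)`: the same fraction fires on `n` and on `φ(n)`, and then
`n a_i / b_i = k a_i (d / b_i) + φ(n) a_i / b_i`. -/

lemma Int.toNat_natCast_mul (c : ℕ) (z : ℤ) : ((c : ℤ) * z).toNat = c * z.toNat := by
  rcases le_total 0 z with hz | hz
  · rw [Int.toNat_mul (Int.natCast_nonneg c) hz, Int.toNat_natCast]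
  · have hcz : (c : ℤ) * z ≤ 0 := Int.mul_nonpos_of_nonneg_of_nonpos (Int.natCast_nonneg c) hz
    rw [Int.toNat_of_nonpos hz, Int.toNat_of_nonpos hcz, mul_zero]

namespace Rat

lemma natCast_mul_eq_of_den_dvd {n : ℕ} {q : ℚ} (h : q.den ∣ n) :
    (n : ℚ) * q = ((n / q.den : ℕ) * q.num : ℤ) := by
  obtain ⟨c, rfl⟩ := h
  rw [Nat.mul_div_cancel_left c q.pos]
  push_cast
  rw [← q.mul_den_eq_num]
  ring

lemma den_natCast_mul_eq_one_iff (n : ℕ) (q : ℚ) : ((n : ℚ) * q).den = 1 ↔ q.den ∣ n := by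
  refine ⟨fun h => ?_, fun h => by rw [natCast_mul_eq_of_den_dvd h, den_intCast]⟩
  have hint : (q.den : ℤ) ∣ n * q.num := by
    refine ⟨((n : ℚ) * q).num, ?_⟩
    have := (((n : ℚ) * q).den_eq_one_iff).1 h
    exact_mod_cast (by push_cast; rw [this, ← q.mul_den_eq_num]; ring :
      ((n * q.num : ℤ) : ℚ) = q.den * ((n : ℚ) * q).num)
  rw [Int.natCast_dvd, Int.natAbs_mul, Int.natAbs_natCast] at hint
  exact (Nat.Coprime.dvd_mul_right q.reduced.symm).1 hint

lemma num_natCast_mul_toNat_of_den_dvd {n : ℕ} {q : ℚ} (h : q.den ∣ n) :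
    ((n : ℚ) * q).num.toNat = n / q.den * q.num.toNat := by
  rw [natCast_mul_eq_of_den_dvd h, num_intCast, Int.toNat_natCast_mul]

lemma num_natCast_mul_toNat_of_eq_mul_add {n k d m : ℕ} {q : ℚ} (h : n = k * d + m)
    (hd : q.den ∣ d) (hm : q.den ∣ m) :
    ((n : ℚ) * q).num.toNat = k * (q.num.toNat * (d / q.den)) + ((m : ℚ) * q).num.toNat := by
  have hn : q.den ∣ n := h ▸ (hd.mul_left k).add hm
  rw [num_natCast_mul_toNat_of_den_dvd hn, num_natCast_mul_toNat_of_den_dvd hm, h,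
    Nat.add_div_of_dvd_right (hd.mul_left k), Nat.mul_div_assoc k hd]
  ring

end Rat

lemma den_dvd_fracD {P : List ℚ} {q : ℚ} (hq : q ∈ P) : q.den ∣ fracD P := by
  induction P with
  | nil => simp at hq
  | cons a P ih =>
    rcases List.mem_cons.1 hq with rfl | hq
    · exact Nat.dvd_lcm_left _ _
    · exact (ih hq).trans (Nat.dvd_lcm_right _ _)

lemma div_mul_add_phi {n : ℕ} (hn : 0 < n) (d : ℕ) : n = (n - 1) / d * d + phi d n := by
  have := Nat.div_add_mod (n - 1) d
  rw [phi, Nat.mul_comm]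
  omega

lemma dvd_phi_iff {b d n : ℕ} (hb : b ∣ d) (hn : 0 < n) : b ∣ phi d n ↔ b ∣ n := by
  conv_rhs => rw [div_mul_add_phi hn d]
  exact (Nat.dvd_add_right (hb.mul_left _)).symm

lemma fracStep_eq_map_find? (P : List ℚ) (n : ℕ) :
    fracStep P n =
      (P.find? fun q => ((n : ℚ) * q).den == 1).map fun q => ((n : ℚ) * q).num.toNat := by
  rw [fracStep, List.find?_map, Option.map_map]
  rfl

lemma find?_den_natCast_mul_phi {n : ℕ} (hn : 0 < n) (P : List ℚ) :
    (P.find? fun q => ((n : ℚ) * q).den == 1) =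
      P.find? fun q => ((phi (fracD P) n : ℚ) * q).den == 1 := by
  refine List.find?_congr fun q hq => ?_
  rw [Bool.eq_iff_iff, beq_iff_eq, beq_iff_eq, Rat.den_natCast_mul_eq_one_iff,
    Rat.den_natCast_mul_eq_one_iff, dvd_phi_iff (den_dvd_fracD hq) hn]

theorem fractran_step_formula_general (P : List ℚ) (n : ℕ) (hn : 0 < n) :
    fracStep P n =
      (fracA' P (phi (fracD P) n)).bind (fun a =>
        (fracO P (phi (fracD P) n)).map (fun o => (n - 1) / fracD P * a + o)) ∧
    (fracStep P n = none ↔ fracA' P (phi (fracD P) n) = none) := by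
  rw [fracStep_eq_map_find?, find?_den_natCast_mul_phi hn, fracA', fracO]
  cases hfind : P.find? fun q => ((phi (fracD P) n : ℚ) * q).den == 1 with
  | none => simp
  | some q =>
    have hqd : q.den ∣ fracD P := den_dvd_fracD (List.mem_of_find?_eq_some hfind)
    have hqm : q.den ∣ phi (fracD P) n :=
      (Rat.den_natCast_mul_eq_one_iff _ q).1 (by simpa using List.find?_some hfind)
    simp only [Option.map_some, Option.bind_some, reduceCtorEq, iff_self, and_true]
    rw [Rat.num_natCast_mul_toNat_of_eq_mul_add (div_mul_add_phi hn _) hqd hqm]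

/-- Lemma `lem:pn` of the paper: for every `n > 0`,
`f_P(n) = ⌊(n−1)/d⌋ · a'_{φ(n)} + o_{φ(n)}` when defined, and `f_P(n)` is
undefined iff `a'_{φ(n)}` is undefined. -/
theorem fractran_step_formula (P : List ℚ) (hpos : ∀ q ∈ P, 0 < q) (n : ℕ) (hn : 0 < n) :
    fracStep P n =
      (fracA' P (phi (fracD P) n)).bind (fun a =>
        (fracO P (phi (fracD P) n)).map (fun o => (n - 1) / fracD P * a + o)) ∧
    (fracStep P n = none ↔ fracA' P (phi (fracD P) n) = none) :=
  fractran_step_formula_general P n hn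
end

section
/- Binary doubling via Fractran-style exponent manipulation: for any natural numbers L and R, repeatedly applying the rewrite 'replace a factor r² by r'' (i.e., r^{2k+b} ↦ r'^{k} with remainder bit b) and 'replace a factor l by l'²' transforms l^L · r^R into l'^{2L} · r^{⌊R/2⌋} · (auxiliary bit information), and these processes terminate: the rules dividing an exponent by 2 or transferring an exponent can only be applied finitely often in sequence. -/
/-!
Applying `p₁ ↦ q₁²` to `p₁^L · c` exactly `L` times gives `(q₁²)^L · c`, and writing
`p₂^R = p₂^(R mod 2) · (p₂²)^⌊R/2⌋` shows that `p₂² ↦ q₂` applied `⌊R/2⌋` times leaves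
`q₂^⌊R/2⌋ · p₂^(R mod 2)`. For termination, a rule `num/den` with `p ∣ den` and `p ∤ num`
strictly lowers the exponent of `p`, which cannot happen forever.
-/

open Relation

def FractranStep (num den a b : ℕ) : Prop :=
  den ∣ a ∧ b * den = a * num

theorem fractranStep_mul (num den c : ℕ) : FractranStep num den (c * den) (c * num) :=
  ⟨dvd_mul_left den c, mul_right_comm c num den⟩

section Rewriting

variable {M : Type*} [CommMonoid M] {r : M → M → Prop} {a b : M}

theorem reflTransGen_mul_pow (h : ∀ c, r (c * a) (c * b)) (n : ℕ) (c : M) :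
    ReflTransGen r (c * a ^ n) (c * b ^ n) := by
  induction n generalizing c with
  | zero => simpa using ReflTransGen.refl
  | succ n ih =>
    have first : r (c * a ^ (n + 1)) (c * b * a ^ n) := by
      rw [pow_succ, ← mul_assoc, mul_right_comm c b]
      exact h (c * a ^ n)
    rw [pow_succ' b, ← mul_assoc]
    exact (ih (c * b)).head first

theorem reflTransGen_mul_pow_div_two (h : ∀ c, r (c * a ^ 2) (c * b)) (n : ℕ) (c : M) :
    ReflTransGen r (c * a ^ n) (c * b ^ (n / 2) * a ^ (n % 2)) := by
  have split : a ^ n = a ^ (n % 2) * (a ^ 2) ^ (n / 2) := by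
    rw [← pow_mul, ← pow_add, Nat.mod_add_div]
  rw [split, ← mul_assoc, mul_right_comm c (b ^ _)]
  exact reflTransGen_mul_pow h (n / 2) (c * a ^ (n % 2))

end Rewriting

theorem factorization_lt_of_mul_eq_mul {p num den a b : ℕ} (hp : p.Prime) (hden : p ∣ den)
    (hnum : ¬ p ∣ num) (ha : a ≠ 0) (h : b * den = a * num) :
    b.factorization p < a.factorization p := by
  have hnum0 : num ≠ 0 := by rintro rfl; exact hnum (dvd_zero p)
  have hbden : b * den ≠ 0 := h ▸ mul_ne_zero ha hnum0
  have key := congrArg (fun n => n.factorization p) h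
  simp only [Nat.factorization_mul (left_ne_zero_of_mul hbden) (right_ne_zero_of_mul hbden),
    Nat.factorization_mul ha hnum0, Finsupp.add_apply,
    Nat.factorization_eq_zero_of_not_dvd hnum] at key
  have := hp.factorization_pos_of_dvd (right_ne_zero_of_mul hbden) hden
  omega

theorem not_exists_infinite_fractran_chain {p num den : ℕ} (hp : p.Prime) (hden : p ∣ den)
    (hnum : ¬ p ∣ num) :
    ¬ ∃ g : ℕ → ℕ, (∀ i, 0 < g i) ∧ ∀ i, g (i + 1) * den = g i * num := by
  rintro ⟨g, hpos, hstep⟩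
  obtain ⟨i, hi⟩ := WellFounded.not_rel_apply_succ (r := (· < ·)) fun i => (g i).factorization p
  exact hi (factorization_lt_of_mul_eq_mul hp hden hnum (hpos i).ne' (hstep i))

/-- Binary doubling/halving via Fractran-style exponent manipulation on numbers
viewed as multisets of prime factors. For pairwise distinct primes
`p₁, p₂, q₁, q₂`, consider the rewrite rules "replace a factor `p₁` by `q₁²`"
(doubling the transferred exponent) and "replace a factor `p₂²` by `q₂`"
(halving, leaving a remainder bit). Then:
* `p₁^L · p₂^R` rewrites in finitely many steps to
  `q₁^(2L) · q₂^⌊R/2⌋ · p₂^(R mod 2)` (the auxiliary bit information), and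
* each of the two rules can only be applied finitely often in sequence
  (on positive numbers), i.e. the processes terminate. -/
theorem fractran_exponent_doubling (p1 p2 q1 q2 : ℕ)
    (hp1 : p1.Prime) (hp2 : p2.Prime) (hq1 : q1.Prime) (hq2 : q2.Prime)
    (hdist : [p1, p2, q1, q2].Pairwise (· ≠ ·)) :
    (∀ L R : ℕ,
      Relation.ReflTransGen
        (fun a b => (p1 ∣ a ∧ b * p1 = a * q1 ^ 2) ∨ (p2 ^ 2 ∣ a ∧ b * p2 ^ 2 = a * q2))
        (p1 ^ L * p2 ^ R) (q1 ^ (2 * L) * q2 ^ (R / 2) * p2 ^ (R % 2))) ∧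
    (¬ ∃ g : ℕ → ℕ, (∀ i, 0 < g i) ∧
        ∀ i, p1 ∣ g i ∧ g (i + 1) * p1 = g i * q1 ^ 2) ∧
    (¬ ∃ g : ℕ → ℕ, (∀ i, 0 < g i) ∧
        ∀ i, p2 ^ 2 ∣ g i ∧ g (i + 1) * p2 ^ 2 = g i * q2) := by
  simp only [List.pairwise_cons, List.mem_cons, List.not_mem_nil] at hdist
  have hpq1 : ¬ p1 ∣ q1 ^ 2 := fun h =>
    hdist.1 q1 (by simp) ((Nat.prime_dvd_prime_iff_eq hp1 hq1).mp (hp1.dvd_of_dvd_pow h))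
  have hpq2 : ¬ p2 ∣ q2 := fun h =>
    hdist.2.1 q2 (by simp) ((Nat.prime_dvd_prime_iff_eq hp2 hq2).mp h)
  refine ⟨fun L R => ?_, fun ⟨g, hpos, hstep⟩ => ?_, fun ⟨g, hpos, hstep⟩ => ?_⟩
  · let rules (a b : ℕ) : Prop := FractranStep (q1 ^ 2) p1 a b ∨ FractranStep q2 (p2 ^ 2) a b
    have double := reflTransGen_mul_pow (r := rules) (fun c => Or.inl (fractranStep_mul _ _ c))
      L (p2 ^ R)
    have halve := reflTransGen_mul_pow_div_two (r := rules)
      (fun c => Or.inr (fractranStep_mul _ _ c)) R (q1 ^ (2 * L))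
    rw [mul_comm, ← pow_mul, mul_comm (p2 ^ R)] at double
    exact double.trans halve
  · exact not_exists_infinite_fractran_chain hp1 dvd_rfl hpq1 ⟨g, hpos, fun i => (hstep i).2⟩
  · exact not_exists_infinite_fractran_chain hp2 (dvd_pow_self p2 two_ne_zero) hpq2
      ⟨g, hpos, fun i => (hstep i).2⟩
end
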